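/- arXiv:2210.02555 — 3 statements merged into one kernel-verified Lean document; each statement's English description precedes it below -/
import Mathlib

section
/- The BH threshold τ_BH = α R_BH / m, with R_BH = max{0 ≤ k ≤ m : P_(k) ≤ αk/m}, satisfies τ_BH = sup{t ≥ 0 : F(t) ≥ t/α}, where F is the empirical pseudo-CDF and the sup of the empty set is taken as 0. Moreover F(τ_BH) = τ_BH/α when R_BH ≥ 1. -/
/-!
Let `N t` be the number of p-values `≤ t`. Since the p-values sorted increasingly are
`Q 1 ≤ … ≤ Q m` and `Q 0 = 0`, for `t ≥ 0` and `k ≤ m` we have `k ≤ N t ↔ Q k ≤ t`.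
If `t ≥ 0` and `N t / m ≥ t / α`, then `Q (N t) ≤ t ≤ α N t / m`, so `N t` is one of the
indices in the definition of `R`; hence `N t ≤ R` and `t ≤ α R / m = τ`. Conversely
`Q R ≤ τ` gives `R ≤ N τ`, so `τ` itself lies in the set, and the first argument applied to
`τ` gives `N τ ≤ R`, i.e. `N τ = R`.
-/

open Finset

theorem card_filter_comp_equiv {ι κ : Type*} [Fintype ι] [Fintype κ] (e : ι ≃ κ)
    (p : κ → Prop) [DecidablePred p] : #{i | p (e i)} = #{j | p j} := by
  simp only [card_filter]
  exact e.sum_comp fun j => if p j then 1 else 0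

theorem Monotone.lt_card_filter_le_iff {m : ℕ} {β : Type*} [LinearOrder β] {f : Fin m → β}
    (hf : Monotone f) (k : Fin m) (t : β) : (k : ℕ) < #{j | f j ≤ t} ↔ f k ≤ t := by
  constructor
  · intro hk
    by_contra! hlt
    have hsub : ({j | f j ≤ t} : Finset (Fin m)) ⊆ Iio k := fun j hj =>
      mem_Iio.2 (hf.reflect_lt (((mem_filter.1 hj).2).trans_lt hlt))
    simpa using (card_le_card hsub).trans_lt' hk
  · intro hk
    have hsub : Iic k ⊆ ({j | f j ≤ t} : Finset (Fin m)) := fun j hj =>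
      mem_filter.2 ⟨mem_univ j, (hf (mem_Iic.1 hj)).trans hk⟩
    simpa using card_le_card hsub

theorem Monotone.le_card_filter_le_iff {m : ℕ} {β : Type*} [LinearOrder β] {f : Fin m → β}
    (hf : Monotone f) {Q : ℕ → β} (hQ : ∀ k : Fin m, Q (k + 1) = f k) {k : ℕ} (hk : k ≤ m)
    {t : β} (h0 : Q 0 ≤ t) : k ≤ #{j | f j ≤ t} ↔ Q k ≤ t := by
  cases k with
  | zero => simpa using h0
  | succ k =>
    rw [Nat.succ_le_iff, show Q (k + 1) = f ⟨k, hk⟩ from hQ ⟨k, hk⟩]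
    exact hf.lt_card_filter_le_iff ⟨k, hk⟩ t

theorem div_le_div_iff_le_mul_div {α : ℝ} (hα : 0 < α) (t x m : ℝ) :
    t / α ≤ x / m ↔ t ≤ α * x / m := by
  rw [mul_div_assoc, div_le_iff₀' hα]

def stepUpSet (m : ℕ) (α : ℝ) (Q : ℕ → ℝ) : Set ℕ := {k | k ≤ m ∧ Q k ≤ α * k / m}

section StepUp

variable {m : ℕ} {α : ℝ} {Q : ℕ → ℝ} {N : ℝ → ℕ}

theorem count_mem_stepUpSet (hN : ∀ t, N t ≤ m)
    (hNQ : ∀ k ≤ m, ∀ t, 0 ≤ t → (k ≤ N t ↔ Q k ≤ t)) {t : ℝ} (ht : 0 ≤ t)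
    (htN : t ≤ α * N t / m) : N t ∈ stepUpSet m α Q :=
  ⟨hN t, ((hNQ _ (hN t) t ht).1 le_rfl).trans htN⟩

theorem le_count_of_mem_stepUpSet (hα : 0 ≤ α)
    (hNQ : ∀ k ≤ m, ∀ t, 0 ≤ t → (k ≤ N t ↔ Q k ≤ t)) {k : ℕ} (hk : k ∈ stepUpSet m α Q) :
    k ≤ N (α * k / m) :=
  (hNQ k hk.1 _ (by positivity)).2 hk.2

theorem stepUp_threshold_eq_csSup (hα : 0 < α) (hN : ∀ t, N t ≤ m)
    (hNQ : ∀ k ≤ m, ∀ t, 0 ≤ t → (k ≤ N t ↔ Q k ≤ t))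
    {R : ℕ} (hR : R = sSup (stepUpSet m α Q)) :
    α * R / m = sSup {t : ℝ | 0 ≤ t ∧ (N t : ℝ) / m ≥ t / α} ∧ N (α * R / m) = R := by
  have hbdd : BddAbove (stepUpSet m α Q) := ⟨m, fun k hk => hk.1⟩
  have hQ0 : Q 0 ≤ 0 := (hNQ 0 m.zero_le 0 le_rfl).1 (N 0).zero_le
  have h0S : 0 ∈ stepUpSet m α Q := ⟨m.zero_le, by simpa using hQ0⟩
  have hRS : R ∈ stepUpSet m α Q := hR ▸ Nat.sSup_mem ⟨0, h0S⟩ hbdd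
  have hle_R : ∀ k ∈ stepUpSet m α Q, k ≤ R := fun k hk => hR ▸ le_csSup hbdd hk
  have hτ0 : 0 ≤ α * R / m := by positivity
  have hRN : R ≤ N (α * R / m) := le_count_of_mem_stepUpSet hα.le hNQ hRS
  have hτN : α * R / m ≤ α * N (α * R / m) / m := by gcongr
  have hgreatest : IsGreatest {t : ℝ | 0 ≤ t ∧ (N t : ℝ) / m ≥ t / α} (α * R / m) := by
    refine ⟨⟨hτ0, (div_le_div_iff_le_mul_div hα _ _ _).2 hτN⟩, ?_⟩
    rintro t ⟨ht0, htN⟩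
    rw [ge_iff_le, div_le_div_iff_le_mul_div hα] at htN
    calc t ≤ α * N t / m := htN
      _ ≤ α * R / m := by gcongr; exact hle_R _ (count_mem_stepUpSet hN hNQ ht0 htN)
  exact ⟨hgreatest.csSup_eq.symm,
    le_antisymm (hle_R _ (count_mem_stepUpSet hN hNQ hτ0 hτN)) hRN⟩

end StepUp

theorem bh_threshold_sup_general (m : ℕ) (α : ℝ) (hα : α ∈ Set.Ioo (0 : ℝ) 1)
    (P : Fin m → ℝ)
    (σ : Equiv.Perm (Fin m)) (hσ : StrictMono (P ∘ σ))
    (Q : ℕ → ℝ) (hQ0 : Q 0 = 0) (hQ : ∀ k : Fin m, Q ((k : ℕ) + 1) = P (σ k))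
    (R : ℕ) (hR : R = sSup {k : ℕ | k ≤ m ∧ Q k ≤ α * k / m}) :
    α * R / m = sSup {t : ℝ | 0 ≤ t ∧
        ((Finset.univ.filter (fun i => P i ≤ t)).card : ℝ) / m ≥ t / α}
    ∧ (1 ≤ R →
        ((Finset.univ.filter (fun i => P i ≤ α * R / m)).card : ℝ) / m
          = (α * R / m) / α) := by
  have hNQ : ∀ k ≤ m, ∀ t, 0 ≤ t → (k ≤ #{i | P i ≤ t} ↔ Q k ≤ t) := fun k hk t ht => by
    rw [← card_filter_comp_equiv σ (fun i => P i ≤ t)]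
    exact hσ.monotone.le_card_filter_le_iff hQ hk (hQ0 ▸ ht)
  obtain ⟨hsup, hcountR⟩ := stepUp_threshold_eq_csSup hα.1
    (fun t => (card_filter_le _ _).trans_eq (card_fin m)) hNQ hR
  refine ⟨hsup, fun _ => ?_⟩
  rw [hcountR, mul_div_assoc, mul_div_cancel_left₀ _ hα.1.ne']

/-- The BH threshold `τ_BH = α R_BH / m` with `R_BH = max{0 ≤ k ≤ m : P_(k) ≤ αk/m}`
satisfies `τ_BH = sup{t ≥ 0 : F t ≥ t/α}` (sup of the empty set taken as 0), where `F`
is the empirical pseudo-CDF; moreover `F(τ_BH) = τ_BH/α` when `R_BH ≥ 1`. -/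
theorem bh_threshold_sup (m : ℕ) (hm : 1 ≤ m) (α : ℝ) (hα : α ∈ Set.Ioo (0 : ℝ) 1)
    (P : Fin m → ℝ) (hrange : ∀ i, P i ∈ Set.Ioc (0 : ℝ) 1)
    (hinj : Function.Injective P)
    (σ : Equiv.Perm (Fin m)) (hσ : StrictMono (P ∘ σ))
    (Q : ℕ → ℝ) (hQ0 : Q 0 = 0) (hQ : ∀ k : Fin m, Q ((k : ℕ) + 1) = P (σ k))
    (R : ℕ) (hR : R = sSup {k : ℕ | k ≤ m ∧ Q k ≤ α * k / m}) :
    α * R / m = sSup {t : ℝ | 0 ≤ t ∧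
        ((Finset.univ.filter (fun i => P i ≤ t)).card : ℝ) / m ≥ t / α}
    ∧ (1 ≤ R →
        ((Finset.univ.filter (fun i => P i ≤ α * R / m)).card : ℝ) / m
          = (α * R / m) / α) :=
  bh_threshold_sup_general m α hα P σ hσ Q hQ0 hQ R hR
end

section
/- If P is uniform on [0,1] and f : [0,1] → (0,1] is a nonincreasing (left-continuous) function, then E[1{P ≤ f(P)} / f(P)] ≤ 1. -/
/-!
Let `q` be the supremum of `{p ∈ [0,1] | p ≤ f p}`. For `p < q` some `r > p` in this set gives
`f p ≥ f r ≥ r`, and letting `r ↑ q` yields `f p ≥ q`; for `p > q` the integrand vanishes.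
So away from the single point `q` the integrand is at most `q⁻¹ · 1[0,q)`, whose integral
is `q⁻¹ · q ≤ 1` (also when `q = 0`, as `0⁻¹ = 0`).
-/

open MeasureTheory Set

noncomputable def crossingPoint (f : ℝ → ℝ) : ℝ := sSup {p ∈ Icc (0 : ℝ) 1 | p ≤ f p}

section CrossingPoint

variable {f : ℝ → ℝ} {p : ℝ}

lemma crossingPoint_nonneg (f : ℝ → ℝ) : 0 ≤ crossingPoint f :=
  Real.sSup_nonneg fun _ hp => hp.1.1

lemma crossingPoint_le_one (f : ℝ → ℝ) : crossingPoint f ≤ 1 :=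
  Real.sSup_le (fun _ hp => hp.1.2) zero_le_one

lemma apply_lt_of_crossingPoint_lt (hp : p ∈ Icc (0 : ℝ) 1) (hqp : crossingPoint f < p) :
    f p < p :=
  not_le.1 fun hpf => hqp.not_ge <| le_csSup ⟨1, fun _ hr => hr.1.2⟩ ⟨hp, hpf⟩

lemma crossingPoint_le_apply (hf : AntitoneOn f (Icc 0 1)) (hp : 0 ≤ p)
    (hpq : p < crossingPoint f) : crossingPoint f ≤ f p := by
  have hne : {p ∈ Icc (0 : ℝ) 1 | p ≤ f p}.Nonempty := by
    by_contra hempty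
    rw [not_nonempty_iff_eq_empty] at hempty
    rw [crossingPoint, hempty, Real.sSup_empty] at hpq
    linarith
  refine le_of_forall_lt fun c hc => ?_
  obtain ⟨r, ⟨hr, hrf⟩, hlt⟩ := exists_lt_of_lt_csSup hne (max_lt hc hpq)
  have hpr : p ≤ r := (le_max_right c p).trans hlt.le
  have hfrp : f r ≤ f p := hf ⟨hp, hpr.trans hr.2⟩ hr hpr
  linarith [le_max_left c p]

lemma ite_le_indicator_Ico_crossingPoint (hf : AntitoneOn f (Icc 0 1)) (hp : p ∈ Icc (0 : ℝ) 1)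
    (hpq : p ≠ crossingPoint f) :
    (if p ≤ f p then 1 / f p else 0) ≤
      (Ico 0 (crossingPoint f)).indicator (fun _ => (crossingPoint f)⁻¹) p := by
  rcases hpq.lt_or_gt with hlt | hgt
  · have hq : crossingPoint f ≤ f p := crossingPoint_le_apply hf hp.1 hlt
    have hqpos : 0 < crossingPoint f := hp.1.trans_lt hlt
    rw [indicator_of_mem (show p ∈ Ico 0 (crossingPoint f) from ⟨hp.1, hlt⟩)]
    split_ifs
    · rw [one_div]
      exact inv_anti₀ hqpos hq
    · positivity
  · rw [if_neg (apply_lt_of_crossingPoint_lt hp hgt).not_ge]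
    exact indicator_nonneg (fun _ _ => inv_nonneg.2 (crossingPoint_nonneg f)) p

end CrossingPoint

lemma setIntegral_Icc_indicator_Ico_inv_le_one {a : ℝ} (ha₀ : 0 ≤ a) (ha₁ : a ≤ 1) :
    ∫ p in Icc (0 : ℝ) 1, (Ico 0 a).indicator (fun _ => a⁻¹) p ≤ 1 := by
  rw [integral_indicator_const _ measurableSet_Ico, measureReal_restrict_apply measurableSet_Ico,
    inter_eq_left.2 (Ico_subset_Icc_self.trans (Icc_subset_Icc_right ha₁)),
    Real.volume_real_Ico_of_le ha₀, sub_zero, smul_eq_mul]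
  exact mul_inv_le_one

theorem uniform_superuniformity_integral_general (f : ℝ → ℝ)
    (hf : AntitoneOn f (Set.Icc (0 : ℝ) 1)) :
    ∫ p in Set.Icc (0 : ℝ) 1, (if p ≤ f p then 1 / f p else 0) ≤ 1 := by
  set q := crossingPoint f
  have hnonneg : 0 ≤ᵐ[volume.restrict (Icc (0 : ℝ) 1)]
      fun p => if p ≤ f p then 1 / f p else 0 := by
    refine (ae_restrict_iff' measurableSet_Icc).2 (.of_forall fun p hp => ?_)
    show 0 ≤ if p ≤ f p then 1 / f p else 0
    split_ifs with hpf
    · exact one_div_nonneg.2 (hp.1.trans hpf)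
    · exact le_rfl
  have hbound : (fun p => if p ≤ f p then 1 / f p else 0)
      ≤ᵐ[volume.restrict (Icc (0 : ℝ) 1)] (Ico 0 q).indicator (fun _ => q⁻¹) := by
    filter_upwards [ae_restrict_mem measurableSet_Icc, ae_restrict_of_ae (volume.ae_ne q)]
      with p hp hpq
    exact ite_le_indicator_Ico_crossingPoint hf hp hpq
  calc ∫ p in Icc (0 : ℝ) 1, (if p ≤ f p then 1 / f p else 0)
      ≤ ∫ p in Icc (0 : ℝ) 1, (Ico 0 q).indicator (fun _ => q⁻¹) p :=
        integral_mono_of_nonneg hnonneg ((integrable_const _).indicator measurableSet_Ico) hbound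
    _ ≤ 1 :=
        setIntegral_Icc_indicator_Ico_inv_le_one (crossingPoint_nonneg f) (crossingPoint_le_one f)

/-- If `P` is uniform on [0,1] and `f : [0,1] → (0,1]` is nonincreasing and
left-continuous, then `E[1{P ≤ f(P)}/f(P)] ≤ 1` (expectation w.r.t. Lebesgue measure
on [0,1]). -/
theorem uniform_superuniformity_integral (f : ℝ → ℝ)
    (hf : AntitoneOn f (Set.Icc (0 : ℝ) 1))
    (hfrange : ∀ p ∈ Set.Icc (0 : ℝ) 1, f p ∈ Set.Ioc (0 : ℝ) 1)
    (hlc : ∀ p ∈ Set.Ioc (0 : ℝ) 1,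
      Filter.Tendsto f (nhdsWithin p (Set.Iio p)) (nhds (f p))) :
    ∫ p in Set.Icc (0 : ℝ) 1, (if p ≤ f p then 1 / f p else 0) ≤ 1 :=
  uniform_superuniformity_integral_general f hf
end

section
/- For independent uniform null p-values, the BH procedure with threshold τ_BH = sup{t : F(t) ≥ t/α} controls the FDR: E[V/(R ∨ 1)] ≤ (m₀/m)·α, where m₀ = |H0|, V is the number of nulls with P_j ≤ τ_BH, and R = m·F(τ_BH). -/
/-!
Write `K(p)` for the number of Benjamini–Hochberg rejections, so that the threshold is
`α K / m` and `R = K`. For a null `j`, let `K_j` be the number of rejections once `p_j` is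
replaced by `0`. Lowering `p_j` can only add rejections, and if `p_j` is rejected in either
configuration then `K = K_j`. Hence `V / (R ∨ 1) = ∑_{j ∈ H₀} 1{p_j ≤ α K_j / m} / K_j`.
Here `K_j` is a function of the other p-values, so it is independent of `p_j`, and each term
has expectation `∑_k P(K_j = k) · (α k / m) / k ≤ α / m`.
-/

open MeasureTheory ProbabilityTheory Finset

namespace BH

variable {ι : Type*} [Fintype ι]

noncomputable def countLe (p : ι → ℝ) (t : ℝ) : ℕ := #{i | p i ≤ t}

noncomputable def rejections (α : ℝ) (p : ι → ℝ) : ℕ :=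
  Nat.findGreatest (fun k => k ≤ countLe p (α / Fintype.card ι * k)) (Fintype.card ι)

noncomputable def threshold (α : ℝ) (p : ι → ℝ) : ℝ :=
  α / Fintype.card ι * rejections α p

variable {α : ℝ} {p : ι → ℝ}

lemma countLe_mono (p : ι → ℝ) : Monotone (countLe p) :=
  fun _ _ hts => card_le_card fun _ => by simpa using fun hi => hi.trans hts

lemma countLe_le_card (p : ι → ℝ) (t : ℝ) : countLe p t ≤ Fintype.card ι :=
  (card_filter_le _ _).trans_eq card_univ

lemma rejections_le_card : rejections α p ≤ Fintype.card ι := Nat.findGreatest_le _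

lemma rejections_le_countLe_threshold : rejections α p ≤ countLe p (threshold α p) :=
  Nat.findGreatest_spec (P := fun k => k ≤ countLe p (α / Fintype.card ι * k)) (Nat.zero_le _)
    (Nat.zero_le _)

lemma le_rejections {k : ℕ} (hk : k ≤ Fintype.card ι)
    (h : k ≤ countLe p (α / Fintype.card ι * k)) : k ≤ rejections α p :=
  Nat.le_findGreatest hk h

lemma countLe_threshold (hα : 0 ≤ α) : countLe p (threshold α p) = rejections α p := by
  refine le_antisymm (le_rejections (countLe_le_card _ _) (countLe_mono p ?_))
    rejections_le_countLe_threshold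
  unfold threshold
  gcongr
  exact_mod_cast rejections_le_countLe_threshold

lemma threshold_mem_Icc (hα : 0 ≤ α) : threshold α p ∈ Set.Icc 0 α := by
  refine ⟨by unfold threshold; positivity, ?_⟩
  rcases isEmpty_or_nonempty ι with hι | hι
  · simp [threshold, hα]
  · have hn : (0 : ℝ) < Fintype.card ι := by exact_mod_cast Fintype.card_pos
    have hK : (rejections α p : ℝ) ≤ Fintype.card ι := by exact_mod_cast rejections_le_card
    calc threshold α p ≤ α / Fintype.card ι * Fintype.card ι := by unfold threshold; gcongr
      _ = α := div_mul_cancel₀ α hn.ne'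

/-- With the empirical distribution function `F t = countLe p t / card ι`, this identifies
`threshold α p` with `τ_BH = sup {t ∈ [0, α] | F t ≥ t / α}`. -/
lemma isGreatest_threshold [Nonempty ι] (hα : 0 < α) :
    IsGreatest {t | t ∈ Set.Icc 0 α ∧ (countLe p t : ℝ) / Fintype.card ι ≥ t / α}
      (threshold α p) := by
  have hn : (0 : ℝ) < Fintype.card ι := by exact_mod_cast Fintype.card_pos
  refine ⟨⟨threshold_mem_Icc hα.le, ?_⟩, ?_⟩
  · rw [ge_iff_le, threshold, div_le_div_iff₀ hα hn]
    calc α / Fintype.card ι * rejections α p * Fintype.card ι = rejections α p * α := by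
          field_simp
      _ ≤ _ := by gcongr; exact rejections_le_countLe_threshold
  · rintro t ⟨-, ht⟩
    have hkt : t ≤ α / Fintype.card ι * countLe p t := by
      rw [ge_iff_le, div_le_div_iff₀ hα hn] at ht
      rw [div_mul_eq_mul_div, le_div_iff₀ hn]
      linarith
    have hk : countLe p t ≤ rejections α p :=
      le_rejections (countLe_le_card _ _) (countLe_mono p hkt)
    calc t ≤ α / Fintype.card ι * countLe p t := hkt
      _ ≤ threshold α p := by unfold threshold; gcongr

section LeaveOneOut

variable [DecidableEq ι] {j : ι}

lemma countLe_le_countLe_update_zero {t : ℝ} (ht : 0 ≤ t) :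
    countLe p t ≤ countLe (Function.update p j 0) t := by
  refine card_le_card fun i => ?_
  rcases eq_or_ne i j with rfl | hij
  · simpa using fun _ => ht
  · simp [hij]

lemma rejections_le_rejections_update_zero (hα : 0 ≤ α) :
    rejections α p ≤ rejections α (Function.update p j 0) :=
  le_rejections rejections_le_card
    (rejections_le_countLe_threshold.trans (countLe_le_countLe_update_zero (by
      unfold threshold; positivity)))

lemma one_le_rejections_update_zero (hα : 0 < α) :
    1 ≤ rejections α (Function.update p j 0) := by
  refine le_rejections (Fintype.card_pos_iff.mpr ⟨j⟩) (card_pos.mpr ⟨j, ?_⟩)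
  simp only [mem_filter, mem_univ, Function.update_self, true_and]
  positivity

/-- Below the leave-one-out threshold, `p j` and `0` are both counted, so the two step-up
searches see the same count there. -/
lemma rejections_update_zero_eq (hα : 0 ≤ α) (h : p j ≤ threshold α (Function.update p j 0)) :
    rejections α p = rejections α (Function.update p j 0) := by
  refine le_antisymm (rejections_le_rejections_update_zero hα)
    (le_rejections rejections_le_card ?_)
  have hcount : countLe (Function.update p j 0) (threshold α (Function.update p j 0))
      = countLe p (threshold α (Function.update p j 0)) := by
    refine congrArg card (filter_congr fun i _ => ?_)
    rcases eq_or_ne i j with rfl | hij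
    · simp only [Function.update_self, h, iff_true]
      unfold threshold; positivity
    · rw [Function.update_of_ne hij]
  exact hcount ▸ rejections_le_countLe_threshold

lemma le_threshold_iff_update_zero (hα : 0 ≤ α) :
    p j ≤ threshold α p ↔ p j ≤ threshold α (Function.update p j 0) := by
  refine ⟨fun h => h.trans ?_, fun h => by rwa [threshold, rejections_update_zero_eq hα h]⟩
  unfold threshold
  gcongr
  exact_mod_cast rejections_le_rejections_update_zero (p := p) (j := j) hα

lemma fdp_eq_sum (hα : 0 < α) (H0 : Finset ι) :
    (#{j ∈ H0 | p j ≤ threshold α p} : ℝ) / max (countLe p (threshold α p) : ℝ) 1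
      = ∑ j ∈ H0, if p j ≤ α / Fintype.card ι * rejections α (Function.update p j 0)
          then (rejections α (Function.update p j 0) : ℝ)⁻¹ else 0 := by
  rw [card_filter, Nat.cast_sum, sum_div]
  refine sum_congr rfl fun j _ => ?_
  change _ = ite (p j ≤ threshold α (Function.update p j 0)) _ _
  by_cases h : p j ≤ threshold α p
  · have h' := (le_threshold_iff_update_zero hα.le).mp h
    have hK1 : (1 : ℝ) ≤ rejections α (Function.update p j 0) := by
      exact_mod_cast one_le_rejections_update_zero (p := p) (j := j) hα
    rw [if_pos h, if_pos h', countLe_threshold hα.le, rejections_update_zero_eq hα.le h',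
      max_eq_left hK1, Nat.cast_one, one_div]
  · rw [if_neg h, if_neg (mt (le_threshold_iff_update_zero hα.le).mpr h), Nat.cast_zero,
      zero_div]

end LeaveOneOut

lemma measurable_countLe (t : ℝ) : Measurable fun p : ι → ℝ => countLe p t := by
  simp only [countLe, card_filter]
  exact Finset.measurable_sum _ fun i _ =>
    Measurable.ite (measurableSet_le (measurable_pi_apply i) measurable_const) measurable_const
      measurable_const

lemma measurable_rejections (α : ℝ) : Measurable (rejections (ι := ι) α) :=
  measurable_findGreatest fun _ _ => measurable_countLe _ measurableSet_Ici

end BH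

lemma ProbabilityTheory.iIndepFun.indepFun_update {Ω ι β γ : Type*} [MeasurableSpace Ω]
    {μ : Measure Ω} [Fintype ι] [DecidableEq ι] [MeasurableSpace β] [MeasurableSpace γ]
    {f : ι → Ω → β} (hf : iIndepFun f μ) (hmeas : ∀ i, Measurable (f i)) (j : ι) (c : β)
    {g : (ι → β) → γ} (hg : Measurable g) :
    IndepFun (fun ω => g (Function.update (fun i => f i ω) j c)) (f j) μ := by
  let extend : (({j}ᶜ : Finset ι) → β) → ι → β :=
    fun v i => if h : i = j then c else v ⟨i, by simpa using h⟩
  have hextend : Measurable extend := by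
    refine measurable_pi_lambda _ fun i => ?_
    by_cases h : i = j
    · simp [extend, h]
    · simpa [extend, h] using measurable_pi_apply _
  have hind := (hf.indepFun_finset {j}ᶜ {j} disjoint_compl_left hmeas).comp (hg.comp hextend)
    (measurable_pi_apply ⟨j, mem_singleton_self j⟩)
  have hupdate : (fun ω => g (Function.update (fun i => f i ω) j c))
      = (g ∘ extend) ∘ fun ω (i : ({j}ᶜ : Finset ι)) => f i ω := by
    ext ω
    simp only [Function.comp_apply]
    congr 1
    ext i
    by_cases h : i = j
    · subst h; simp [extend]
    · simp [extend, h]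
  rw [hupdate]
  exact hind

section Superuniform

variable {Ω : Type*} {X : Ω → ℝ} {N : Ω → ℕ} {c : ℝ} {M : ℕ}

lemma ite_le_mul_eq_sum_indicator (hNM : ∀ ω, N ω ≤ M) :
    (fun ω => if X ω ≤ c * N ω then (N ω : ℝ)⁻¹ else 0) = fun ω =>
      ∑ k ∈ range (M + 1),
        (N ⁻¹' {k} ∩ X ⁻¹' Set.Iic (c * k)).indicator (fun _ => (k : ℝ)⁻¹) ω := by
  ext ω
  rw [sum_eq_single_of_mem (N ω) (mem_range_succ_iff.mpr (hNM ω))]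
  · by_cases h : X ω ≤ c * N ω <;> simp [h, Set.indicator]
  · intro k _ hk
    exact Set.indicator_of_notMem (fun hω => hk hω.1.symm) _

variable [MeasurableSpace Ω] {μ : Measure Ω}

lemma measurableSet_preimage_singleton_inter_preimage_Iic (hX : Measurable X)
    (hN : Measurable N) (k : ℕ) : MeasurableSet (N ⁻¹' {k} ∩ X ⁻¹' Set.Iic (c * k)) :=
  (hN (measurableSet_singleton k)).inter (hX measurableSet_Iic)

lemma integrable_ite_le_mul [IsFiniteMeasure μ] (hX : Measurable X) (hN : Measurable N)
    (hNM : ∀ ω, N ω ≤ M) :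
    Integrable (fun ω => if X ω ≤ c * N ω then (N ω : ℝ)⁻¹ else 0) μ := by
  rw [ite_le_mul_eq_sum_indicator hNM]
  exact integrable_finsetSum _ fun k _ => (integrable_const _).indicator
    (measurableSet_preimage_singleton_inter_preimage_Iic hX hN k)

/-- Conditionally on `N = k`, the event `X ≤ c k` has probability at most `c k`. -/
lemma integral_ite_le_mul_le [IsProbabilityMeasure μ] (hX : Measurable X) (hN : Measurable N)
    (hXN : IndepFun N X μ) (hc : 0 ≤ c) (hNM : ∀ ω, N ω ≤ M) (hcM : c * M ≤ 1)
    (hsuper : ∀ t ∈ Set.Icc (0 : ℝ) 1, μ {ω | X ω ≤ t} ≤ ENNReal.ofReal t) :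
    ∫ ω, (if X ω ≤ c * N ω then (N ω : ℝ)⁻¹ else 0) ∂μ ≤ c := by
  have hA := measurableSet_preimage_singleton_inter_preimage_Iic (c := c) hX hN
  have hterm : ∀ k ∈ range (M + 1), μ.real (N ⁻¹' {k} ∩ X ⁻¹' Set.Iic (c * k)) * (k : ℝ)⁻¹
      ≤ μ.real (N ⁻¹' {k}) * c := by
    intro k hk
    have hck : c * k ∈ Set.Icc (0 : ℝ) 1 :=
      ⟨by positivity, le_trans (by gcongr; exact_mod_cast mem_range_succ_iff.mp hk) hcM⟩
    have hXk : μ.real (X ⁻¹' Set.Iic (c * k)) ≤ c * k :=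
      ENNReal.toReal_le_of_le_ofReal hck.1 (hsuper _ hck)
    rw [measureReal_def, hXN.measure_inter_preimage_eq_mul _ _ (measurableSet_singleton k)
      measurableSet_Iic, ENNReal.toReal_mul, ← measureReal_def, ← measureReal_def, mul_assoc]
    gcongr
    rcases Nat.eq_zero_or_pos k with rfl | hk0
    · simpa using hc
    · calc μ.real (X ⁻¹' Set.Iic (c * k)) * (k : ℝ)⁻¹ ≤ c * k * (k : ℝ)⁻¹ := by gcongr
        _ = c := by field_simp
  rw [ite_le_mul_eq_sum_indicator hNM,
    integral_finsetSum _ fun k _ => (integrable_const _).indicator (hA k)]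
  simp only [integral_indicator_const _ (hA _), smul_eq_mul]
  calc ∑ k ∈ range (M + 1), μ.real (N ⁻¹' {k} ∩ X ⁻¹' Set.Iic (c * k)) * (k : ℝ)⁻¹
      ≤ ∑ k ∈ range (M + 1), μ.real (N ⁻¹' {k}) * c := sum_le_sum hterm
    _ ≤ 1 * c := by
        rw [← sum_mul,
          sum_measureReal_preimage_singleton _ fun k _ => hN (measurableSet_singleton k)]
        gcongr
        exact measureReal_le_one
    _ = c := one_mul c

end Superuniform

open BH in
theorem bh_fdr_control_general {Ω : Type*} [MeasurableSpace Ω] (μ : Measure Ω)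
    [IsProbabilityMeasure μ] (m : ℕ) (hm : 1 ≤ m) (α : ℝ) (hα : α ∈ Set.Ioo (0 : ℝ) 1)
    (P : Fin m → Ω → ℝ) (hmeas : ∀ i, Measurable (P i))
    (hindep : ProbabilityTheory.iIndepFun P μ)
    (H0 : Finset (Fin m))
    (hunif : ∀ j ∈ H0, ∀ t ∈ Set.Icc (0 : ℝ) 1, μ {ω | P j ω ≤ t} = ENNReal.ofReal t)
    (τ : Ω → ℝ)
    (hτ : ∀ ω, τ ω = sSup {t : ℝ | t ∈ Set.Icc (0 : ℝ) α ∧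
        ((Finset.univ.filter (fun i => P i ω ≤ t)).card : ℝ) / m ≥ t / α}) :
    ∫ ω, ((H0.filter (fun j => P j ω ≤ τ ω)).card : ℝ)
        / max ((Finset.univ.filter (fun i => P i ω ≤ τ ω)).card : ℝ) 1 ∂μ
      ≤ (H0.card : ℝ) / m * α := by
  obtain ⟨hα0, hα1⟩ := hα
  have : Nonempty (Fin m) := ⟨⟨0, hm⟩⟩
  let K (j : Fin m) (ω : Ω) : ℕ := rejections α (Function.update (fun i => P i ω) j 0)
  have hK (j : Fin m) : Measurable (K j) :=
    (measurable_rejections α).comp (measurable_update_left.comp (measurable_pi_lambda _ hmeas))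
  have hKm (j : Fin m) (ω : Ω) : K j ω ≤ m := rejections_le_card.trans_eq (Fintype.card_fin m)
  have hτ_eq (ω : Ω) : τ ω = threshold α fun i => P i ω := by
    have h := (isGreatest_threshold (p := fun i => P i ω) hα0).csSup_eq
    rw [Fintype.card_fin] at h
    rw [hτ ω]
    exact h
  calc _ = ∫ ω, ∑ j ∈ H0, (if P j ω ≤ α / m * K j ω then (K j ω : ℝ)⁻¹ else 0) ∂μ := by
        refine integral_congr_ae (Filter.Eventually.of_forall fun ω => ?_)
        have h := fdp_eq_sum (p := fun i => P i ω) hα0 H0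
        rwa [Fintype.card_fin, ← hτ_eq ω] at h
    _ = ∑ j ∈ H0, ∫ ω, (if P j ω ≤ α / m * K j ω then (K j ω : ℝ)⁻¹ else 0) ∂μ :=
        integral_finsetSum _ fun j _ => integrable_ite_le_mul (hmeas j) (hK j) (hKm j)
    _ ≤ ∑ j ∈ H0, α / m := sum_le_sum fun j hj =>
        integral_ite_le_mul_le (hmeas j) (hK j)
          (hindep.indepFun_update hmeas j 0 (measurable_rejections α)) (by positivity) (hKm j)
          (by rw [div_mul_cancel₀ _ (by positivity)]; exact hα1.le)
          (fun t ht => (hunif j hj t ht).le)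
    _ = (H0.card : ℝ) / m * α := by rw [sum_const, nsmul_eq_mul]; ring

/-- BH FDR control: for independent p-values with uniform nulls, the BH procedure with
threshold `τ_BH = sup{t : F t ≥ t/α}` controls the FDR: `E[V/(R ∨ 1)] ≤ (m₀/m)·α`. -/
theorem bh_fdr_control {Ω : Type*} [MeasurableSpace Ω] (μ : Measure Ω)
    [IsProbabilityMeasure μ] (m : ℕ) (hm : 1 ≤ m) (α : ℝ) (hα : α ∈ Set.Ioo (0 : ℝ) 1)
    (P : Fin m → Ω → ℝ) (hmeas : ∀ i, Measurable (P i))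
    (hindep : ProbabilityTheory.iIndepFun P μ)
    (hrange : ∀ i ω, P i ω ∈ Set.Icc (0 : ℝ) 1)
    (H0 : Finset (Fin m))
    (hunif : ∀ j ∈ H0, ∀ t ∈ Set.Icc (0 : ℝ) 1, μ {ω | P j ω ≤ t} = ENNReal.ofReal t)
    (τ : Ω → ℝ)
    (hτ : ∀ ω, τ ω = sSup {t : ℝ | t ∈ Set.Icc (0 : ℝ) α ∧
        ((Finset.univ.filter (fun i => P i ω ≤ t)).card : ℝ) / m ≥ t / α}) :
    ∫ ω, ((H0.filter (fun j => P j ω ≤ τ ω)).card : ℝ)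
        / max ((Finset.univ.filter (fun i => P i ω ≤ τ ω)).card : ℝ) 1 ∂μ
      ≤ (H0.card : ℝ) / m * α :=
  bh_fdr_control_general μ m hm α hα P hmeas hindep H0 hunif τ hτ
end
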